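/- Let α₀ = 3, α₁ the root of 4/2^α + 22/4^α = 1, and α₂ the root of 4/2^α + 12/4^α + 60/8^α = 1. Then α₂ < α₁ < α₀. -/

import Mathlib

/-!
In the variable `x = 2 ^ α` both characteristic equations read `∑ cₖ / x ^ k = 1` with positive
coefficients, so their left-hand sides are strictly decreasing in `α` and each root is located by
evaluating the left-hand side at a single point. At `α = 3` (`x = 8`) the first one is
`4/8 + 22/64 < 1`, so `α₁ < 3`. At `α = log₂ 7` (`x = 7`) the first one is `50/49 > 1` and the
second one is `340/343 < 1`, so `α₂ < log₂ 7 < α₁`.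
-/

open Real

lemma strictAnti_div_rpow {b c : ℝ} (hb : 1 < b) (hc : 0 < c) :
    StrictAnti fun α : ℝ => c / b ^ α := fun _ _ hαβ =>
  div_lt_div_of_pos_left hc (rpow_pos_of_pos (by linarith) _) (rpow_lt_rpow_of_exponent_lt hb hαβ)

lemma pow_rpow_logb {b x : ℝ} (hb : 0 < b) (hb₁ : b ≠ 1) (hx : 0 < x) (n : ℕ) :
    (b ^ n) ^ logb b x = x ^ n := by
  rw [← rpow_pow_comm hb.le, rpow_logb hb hb₁ hx]

theorem exponents_strictly_decrease (α₀ α₁ α₂ : ℝ)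
    (h₀ : α₀ = 3)
    (h₁ : 4 / (2:ℝ) ^ α₁ + 22 / (4:ℝ) ^ α₁ = 1)
    (h₂ : 4 / (2:ℝ) ^ α₂ + 12 / (4:ℝ) ^ α₂ + 60 / (8:ℝ) ^ α₂ = 1) :
    α₂ < α₁ ∧ α₁ < α₀ := by
  set F₁ : ℝ → ℝ := fun α => 4 / (2:ℝ) ^ α + 22 / (4:ℝ) ^ α
  set F₂ : ℝ → ℝ := fun α => 4 / (2:ℝ) ^ α + 12 / (4:ℝ) ^ α + 60 / (8:ℝ) ^ α
  have hF₁ : StrictAnti F₁ :=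
    (strictAnti_div_rpow (by norm_num) (by norm_num)).add
      (strictAnti_div_rpow (by norm_num) (by norm_num))
  have hF₂ : StrictAnti F₂ :=
    ((strictAnti_div_rpow (by norm_num) (by norm_num)).add
      (strictAnti_div_rpow (by norm_num) (by norm_num))).add
      (strictAnti_div_rpow (by norm_num) (by norm_num))
  set L := logb 2 7
  have h2L : (2:ℝ) ^ L = 7 := rpow_logb (by norm_num) (by norm_num) (by norm_num)
  have h4L : (4:ℝ) ^ L = 49 := by
    rw [show (4:ℝ) = 2 ^ 2 by norm_num, pow_rpow_logb (by norm_num) (by norm_num) (by norm_num)]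
    norm_num
  have h8L : (8:ℝ) ^ L = 343 := by
    rw [show (8:ℝ) = 2 ^ 3 by norm_num, pow_rpow_logb (by norm_num) (by norm_num) (by norm_num)]
    norm_num
  have hF₁L : F₁ α₁ < F₁ L := by simp only [F₁, h₁, h2L, h4L]; norm_num
  have hF₂L : F₂ L < F₂ α₂ := by simp only [F₂, h₂, h2L, h4L, h8L]; norm_num
  have hF₁α₀ : F₁ α₀ < F₁ α₁ := by simp only [F₁, h₀, h₁]; norm_num
  exact ⟨(hF₂.lt_iff_gt.mp hF₂L).trans (hF₁.lt_iff_gt.mp hF₁L), hF₁.lt_iff_gt.mp hF₁α₀⟩
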